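/- Let μ be an absolutely α-friendly compactly supported measure on ℝ^k, S ⊆ ℝ^{k−1} a K₁-quasiconvex set, f : S → ℝ with ‖f''‖_S ≤ K₂/ρ, Γ the graph of f, and β < α. Then there is C > 0 (depending on K₁, K₂, μ, β) such that for every ball B = B(x,ρ) with x ∈ supp(μ) and every ε > 0, μ(B ∩ Γ^{(ερ)}) ≤ C·ε^β·μ(B), where Γ^{(r)} is the closed r-neighborhood of Γ. -/

import Mathlib

/-!
Quasiconvexity turns the bound on `f''` into a second-order Taylor estimate, so at scale `rρ`
the graph stays within `≈ r²ρ` of a tangent hyperplane. Cover the `r²ρ`-neighbourhood of the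
graph in a ball by disjoint balls of radius `rρ` (Vitali). On each, absolute decay of the
tangent hyperplane gains `r ^ α`; the balls themselves lie in a `2rρ`-neighbourhood of the
graph, which a bound with exponent `γ` controls by `r ^ γ`. So `ε ^ γ` improves to
`ε ^ ((α + γ) / 2)`: starting from `γ = 0` (the Federer bound), `n` rounds give
`γ = α (1 - 2⁻ⁿ)`, which exceeds `β` for large `n`.
-/

open MeasureTheory Metric Set
open scoped RealInnerProductSpace

variable {m : ℕ}

/-- The (topological) support of a measure. -/
def msupp {X : Type*} [MetricSpace X] [MeasurableSpace X] (μ : Measure X) : Set X :=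
  {x | ∀ ρ > 0, 0 < μ (Metric.ball x ρ)}

/-- `μ` is absolutely `α`-decaying with constant `C` at scales `≤ ρ₀`. -/
def AbsDecaying (α C ρ₀ : ℝ) (μ : Measure (EuclideanSpace ℝ (Fin (m + 1)))) : Prop :=
  ∀ x ∈ msupp μ, ∀ ρ : ℝ, 0 < ρ → ρ ≤ ρ₀ →
    ∀ (w : EuclideanSpace ℝ (Fin (m + 1))) (t : ℝ), w ≠ 0 → ∀ ε : ℝ, 0 < ε →
      μ (closedBall x ρ ∩ cthickening (ε * ρ) {y | ⟪y, w⟫ = t}) ≤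
        ENNReal.ofReal (C * ε ^ α) * μ (closedBall x ρ)

/-- `μ` is Federer (doubling) with constant `C` at scales `≤ ρ₀`. -/
def Federer (C ρ₀ : ℝ) (μ : Measure (EuclideanSpace ℝ (Fin (m + 1)))) : Prop :=
  ∀ x ∈ msupp μ, ∀ ρ : ℝ, 0 < ρ → ρ ≤ ρ₀ →
    μ (closedBall x (2 * ρ)) ≤ ENNReal.ofReal C * μ (closedBall x ρ)

/-- `S` is `K`-quasiconvex. -/
def IsQuasiconvex (K : ℝ) (S : Set (EuclideanSpace ℝ (Fin m))) : Prop :=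
  ∀ x ∈ S, ∀ y ∈ S, ∃ γ : ℝ → EuclideanSpace ℝ (Fin m),
    ContinuousOn γ (Icc 0 1) ∧ γ 0 = x ∧ γ 1 = y ∧ (∀ t ∈ Icc (0:ℝ) 1, γ t ∈ S) ∧
      eVariationOn γ (Icc 0 1) ≤ ENNReal.ofReal (K * ‖y - x‖)

/-- The graph of `f : S → ℝ`, as a subset of `ℝ^{m+1} = ℝ^m × ℝ`. -/
def graphOf (S : Set (EuclideanSpace ℝ (Fin m))) (f : EuclideanSpace ℝ (Fin m) → ℝ) :
    Set (EuclideanSpace ℝ (Fin (m + 1))) :=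
  {p | ∃ z ∈ S, p = WithLp.toLp 2 (Fin.snoc (α := fun _ => ℝ) (WithLp.ofLp z) (f z))}

open Filter Topology
open scoped ENNReal

section Variation

variable {E : Type*} [PseudoMetricSpace E]

theorem dist_le_variationOnFromTo_sub {γ : ℝ → E} {s : Set ℝ}
    (hγ : LocallyBoundedVariationOn γ s) {a c t : ℝ} (ha : a ∈ s) (hc : c ∈ s) (ht : t ∈ s)
    (hct : c ≤ t) :
    dist (γ t) (γ c) ≤ variationOnFromTo γ s a t - variationOnFromTo γ s a c := by
  rw [← variationOnFromTo.add hγ ha hc ht, add_sub_cancel_left,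
    variationOnFromTo.eq_of_le _ _ hct, dist_comm, dist_edist]
  exact ENNReal.toReal_mono (hγ c t hc ht)
    (eVariationOn.edist_le γ ⟨hc, le_rfl, hct⟩ ⟨ht, hct, le_rfl⟩)

theorem continuousOn_variationOnFromTo {γ : ℝ → E} {a b c : ℝ}
    (hγ : ContinuousOn γ (Icc a b)) (hγv : BoundedVariationOn γ (Icc a b)) (hc : c ∈ Icc a b) :
    ContinuousOn (variationOnFromTo γ (Icc a b) c) (Icc a b) := by
  intro x hx
  have hleft := variationOnFromTo.tendsto_left hc hx hγv.locallyBoundedVariationOn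
    ((hγ x hx).mono inter_subset_left)
  have hright := variationOnFromTo.tendsto_right hc hx hγv.locallyBoundedVariationOn
    ((hγ x hx).mono inter_subset_left)
  rw [dist_self, sub_zero] at hleft
  rw [dist_self, add_zero] at hright
  have hsplit : Icc a b ⊆ insert x ((Icc a b ∩ Iio x) ∪ (Icc a b ∩ Ioi x)) := by
    intro y hy
    rcases lt_trichotomy y x with h | h | h <;> simp [*]
  exact (continuousWithinAt_insert_self.2 (ContinuousWithinAt.union hleft hright)).mono hsplit

end Variation

section PathMeanValue

variable {E F : Type*} [NormedAddCommGroup E] [NormedSpace ℝ E]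
  [NormedAddCommGroup F] [NormedSpace ℝ F]

theorem eventually_norm_sub_le_of_hasFDerivWithinAt {S : Set E} {h : E → F} {h' : E →L[ℝ] F}
    {γ : ℝ → E} {s : Set ℝ} {c : ℝ} (hh : HasFDerivWithinAt h h' S (γ c))
    (hγ : ContinuousWithinAt γ s c) (hγS : MapsTo γ s S) {D : ℝ} (hD : ‖h'‖ < D) :
    ∀ᶠ t in 𝓝[s] c, ‖h (γ t) - h (γ c)‖ ≤ D * ‖γ t - γ c‖ := by
  filter_upwards [(hγ.tendsto_nhdsWithin hγS).eventually (hh.isLittleO.def (sub_pos.2 hD))]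
    with t ht
  calc ‖h (γ t) - h (γ c)‖ = ‖(h (γ t) - h (γ c) - h' (γ t - γ c)) + h' (γ t - γ c)‖ := by
        rw [sub_add_cancel]
    _ ≤ (D - ‖h'‖) * ‖γ t - γ c‖ + ‖h'‖ * ‖γ t - γ c‖ := norm_add_le_of_le ht (h'.le_opNorm _)
    _ = D * ‖γ t - γ c‖ := by ring

/-- Continuous induction: the set where the bound holds is closed, since the variation is
continuous along a continuous path. -/
theorem norm_sub_le_mul_variationOnFromTo {S : Set E} {h : E → F} {h' : E → E →L[ℝ] F}
    (hh : ∀ z ∈ S, HasFDerivWithinAt h (h' z) S z) {γ : ℝ → E} {a b : ℝ}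
    (hγ : ContinuousOn γ (Icc a b)) (hγv : BoundedVariationOn γ (Icc a b))
    (hγS : MapsTo γ (Icc a b) S) {D : ℝ} (hD : ∀ t ∈ Icc a b, ‖h' (γ t)‖ < D) :
    ∀ t ∈ Icc a b, ‖h (γ t) - h (γ a)‖ ≤ D * variationOnFromTo γ (Icc a b) a t := by
  intro t ht
  set v := variationOnFromTo γ (Icc a b) a
  have ha : a ∈ Icc a b := left_mem_Icc.2 (ht.1.trans ht.2)
  set s := {t | t ∈ Icc a b ∧ ‖h (γ t) - h (γ a)‖ ≤ D * v t}
  have hs : IsClosed (s ∩ Icc a b) := by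
    rw [inter_eq_left.2 fun t ht => ht.1]
    exact isClosed_Icc.isClosed_le
      ((ContinuousOn.comp (fun z hz => (hh z hz).continuousWithinAt) hγ hγS).sub
        continuousOn_const).norm
      (continuousOn_const.mul (continuousOn_variationOnFromTo hγ hγv ha))
  have hstep : ∀ c ∈ s ∩ Ico a b, s ∈ 𝓝[>] c := by
    rintro c ⟨⟨hcI, hc⟩, -, hcb⟩
    have hsub : Ioo c b ⊆ Icc a b := Ioo_subset_Icc_self.trans (Icc_subset_Icc hcI.1 le_rfl)
    rw [← nhdsWithin_Ioo_eq_nhdsGT hcb]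
    filter_upwards [nhdsWithin_mono _ hsub (eventually_norm_sub_le_of_hasFDerivWithinAt
        (hh _ (hγS hcI)) (hγ c hcI) hγS (hD c hcI)), self_mem_nhdsWithin] with t ht htc
    have hD0 : 0 ≤ D := (norm_nonneg _).trans (hD c hcI).le
    have hvar := dist_le_variationOnFromTo_sub hγv.locallyBoundedVariationOn ha hcI (hsub htc)
      htc.1.le
    rw [dist_eq_norm] at hvar
    refine ⟨hsub htc, ?_⟩
    calc ‖h (γ t) - h (γ a)‖ ≤ ‖h (γ c) - h (γ a)‖ + ‖h (γ t) - h (γ c)‖ := by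
          rw [add_comm]; exact norm_sub_le_norm_sub_add_norm_sub _ _ _
      _ ≤ D * v c + D * (v t - v c) :=
          add_le_add hc (ht.trans (mul_le_mul_of_nonneg_left hvar hD0))
      _ = D * v t := by ring
  exact (hs.Icc_subset_of_forall_mem_nhdsWithin ⟨ha, by simp [v, variationOnFromTo.self]⟩
    hstep ht).2

theorem norm_sub_le_of_path {S : Set E} {h : E → F} {h' : E → E →L[ℝ] F}
    (hh : ∀ z ∈ S, HasFDerivWithinAt h (h' z) S z) {γ : ℝ → E} {a b : ℝ} (hab : a ≤ b)
    (hγ : ContinuousOn γ (Icc a b)) (hγv : BoundedVariationOn γ (Icc a b))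
    (hγS : MapsTo γ (Icc a b) S) {D : ℝ} (hD : ∀ t ∈ Icc a b, ‖h' (γ t)‖ ≤ D) :
    ‖h (γ b) - h (γ a)‖ ≤ D * (eVariationOn γ (Icc a b)).toReal := by
  have hvb : variationOnFromTo γ (Icc a b) a b = (eVariationOn γ (Icc a b)).toReal := by
    rw [variationOnFromTo.eq_of_le _ _ hab, inter_self]
  rw [← hvb]
  refine ge_of_tendsto (((continuous_id.mul continuous_const).tendsto D).mono_left
    nhdsWithin_le_nhds) (eventually_nhdsWithin_of_forall (s := Ioi D) fun D' hD' => ?_)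
  exact norm_sub_le_mul_variationOnFromTo hh hγ hγv hγS (fun t ht => (hD t ht).trans_lt hD') b
    (right_mem_Icc.2 hab)

theorem abs_sub_sub_le_of_path {S : Set E} {f : E → ℝ} {f' : E → E →L[ℝ] ℝ}
    {f'' : E → E →L[ℝ] E →L[ℝ] ℝ} (hf : ∀ z ∈ S, HasFDerivWithinAt f (f' z) S z)
    (hf' : ∀ z ∈ S, HasFDerivWithinAt f' (f'' z) S z) {M : ℝ} (hM : ∀ z ∈ S, ‖f'' z‖ ≤ M)
    {γ : ℝ → E} (hγ : ContinuousOn γ (Icc 0 1)) (hγS : MapsTo γ (Icc 0 1) S) {V : ℝ}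
    (hV : 0 ≤ V) (hγv : eVariationOn γ (Icc 0 1) ≤ ENNReal.ofReal V) :
    |f (γ 1) - f (γ 0) - f' (γ 0) (γ 1 - γ 0)| ≤ M * V ^ 2 := by
  have hbv : BoundedVariationOn γ (Icc 0 1) := ne_top_of_le_ne_top ENNReal.ofReal_ne_top hγv
  have hvar : ∀ t ∈ Icc (0 : ℝ) 1, (eVariationOn γ (Icc 0 t)).toReal ≤ V := fun t ht =>
    ENNReal.toReal_le_of_le_ofReal hV ((eVariationOn.mono γ (Icc_subset_Icc_right ht.2)).trans hγv)
  have hM0 : 0 ≤ M := (norm_nonneg (f'' (γ 0))).trans (hM _ (hγS (left_mem_Icc.2 zero_le_one)))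
  have hf'_near : ∀ t ∈ Icc (0 : ℝ) 1, ‖f' (γ t) - f' (γ 0)‖ ≤ M * V := by
    intro t ht
    have hsub : Icc 0 t ⊆ Icc (0 : ℝ) 1 := Icc_subset_Icc_right ht.2
    calc ‖f' (γ t) - f' (γ 0)‖ ≤ M * (eVariationOn γ (Icc 0 t)).toReal :=
          norm_sub_le_of_path hf' ht.1 (hγ.mono hsub) (hbv.mono hsub) (hγS.mono_left hsub)
            fun s hs => hM _ (hγS (hsub hs))
      _ ≤ M * V := mul_le_mul_of_nonneg_left (hvar t ht) hM0
  have hchain := norm_sub_le_of_path (h := fun y => f y - f' (γ 0) y)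
    (fun z hz => (hf z hz).sub (f' (γ 0)).hasFDerivWithinAt) zero_le_one hγ hbv hγS hf'_near
  rw [Real.norm_eq_abs, sub_sub_sub_comm, ← map_sub] at hchain
  calc _ ≤ M * V * (eVariationOn γ (Icc 0 1)).toReal := hchain
    _ ≤ M * V * V := mul_le_mul_of_nonneg_left (hvar 1 (right_mem_Icc.2 zero_le_one))
        (mul_nonneg hM0 hV)
    _ = M * V ^ 2 := by ring

def AffineApproxOn (A : ℝ) (S : Set E) (f : E → ℝ) : Prop :=
  ∀ z ∈ S, ∃ L : E →L[ℝ] ℝ, ∀ z' ∈ S, |f z' - f z - L (z' - z)| ≤ A * ‖z' - z‖ ^ 2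

theorem AffineApproxOn.mono {A B : ℝ} {S : Set E} {f : E → ℝ} (hf : AffineApproxOn A S f)
    (hAB : A ≤ B) : AffineApproxOn B S f := fun z hz =>
  (hf z hz).imp fun _ hL z' hz' =>
    (hL z' hz').trans (mul_le_mul_of_nonneg_right hAB (sq_nonneg _))

end PathMeanValue

theorem IsQuasiconvex.affineApproxOn {K M : ℝ} {S : Set (EuclideanSpace ℝ (Fin m))}
    (hS : IsQuasiconvex K S) (hK : 0 ≤ K) {f : EuclideanSpace ℝ (Fin m) → ℝ}
    {f' : EuclideanSpace ℝ (Fin m) → (EuclideanSpace ℝ (Fin m) →L[ℝ] ℝ)}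
    {f'' : EuclideanSpace ℝ (Fin m) →
      (EuclideanSpace ℝ (Fin m) →L[ℝ] EuclideanSpace ℝ (Fin m) →L[ℝ] ℝ)}
    (hf : ∀ z ∈ S, HasFDerivWithinAt f (f' z) S z)
    (hf' : ∀ z ∈ S, HasFDerivWithinAt f' (f'' z) S z) (hM : ∀ z ∈ S, ‖f'' z‖ ≤ M) :
    AffineApproxOn (M * K ^ 2) S f := by
  intro z hz
  refine ⟨f' z, fun z' hz' => ?_⟩
  obtain ⟨γ, hγ, rfl, rfl, hγS, hγv⟩ := hS _ hz _ hz'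
  calc _ ≤ M * (K * ‖γ 1 - γ 0‖) ^ 2 :=
        abs_sub_sub_le_of_path hf hf' hM hγ hγS (by positivity) hγv
    _ = _ := by ring

namespace EuclideanSpace

def snoc (z : EuclideanSpace ℝ (Fin m)) (s : ℝ) : EuclideanSpace ℝ (Fin (m + 1)) :=
  WithLp.toLp 2 (Fin.snoc (α := fun _ => ℝ) (WithLp.ofLp z) s)

theorem snoc_sub_snoc (a c : EuclideanSpace ℝ (Fin m)) (b d : ℝ) :
    snoc a b - snoc c d = snoc (a - c) (b - d) := by
  ext i
  refine Fin.lastCases ?_ (fun j => ?_) i <;> simp [snoc]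

theorem inner_snoc_snoc (a c : EuclideanSpace ℝ (Fin m)) (b d : ℝ) :
    ⟪snoc a b, snoc c d⟫ = ⟪a, c⟫ + b * d := by
  simp [snoc, PiLp.inner_apply, Fin.sum_univ_castSucc, mul_comm]

theorem norm_snoc_sq (a : EuclideanSpace ℝ (Fin m)) (b : ℝ) :
    ‖snoc a b‖ ^ 2 = ‖a‖ ^ 2 + b ^ 2 := by
  rw [← real_inner_self_eq_norm_sq, ← real_inner_self_eq_norm_sq, inner_snoc_snoc, sq]

theorem norm_le_norm_snoc (a : EuclideanSpace ℝ (Fin m)) (b : ℝ) : ‖a‖ ≤ ‖snoc a b‖ :=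
  (sq_le_sq₀ (norm_nonneg _) (norm_nonneg _)).1 (by rw [norm_snoc_sq]; nlinarith)

theorem abs_le_norm_snoc (a : EuclideanSpace ℝ (Fin m)) (b : ℝ) : |b| ≤ ‖snoc a b‖ :=
  abs_le_of_sq_le_sq (by rw [norm_snoc_sq]; nlinarith [sq_nonneg ‖a‖]) (norm_nonneg _)

noncomputable def tangentNormal (L : EuclideanSpace ℝ (Fin m) →L[ℝ] ℝ) :
    EuclideanSpace ℝ (Fin (m + 1)) :=
  snoc (-(InnerProductSpace.toDual ℝ _).symm L) 1

theorem inner_snoc_tangentNormal (L : EuclideanSpace ℝ (Fin m) →L[ℝ] ℝ)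
    (z : EuclideanSpace ℝ (Fin m)) (s : ℝ) : ⟪snoc z s, tangentNormal L⟫ = s - L z := by
  rw [tangentNormal, inner_snoc_snoc, inner_neg_right, real_inner_comm,
    InnerProductSpace.toDual_symm_apply]
  ring

theorem one_le_norm_tangentNormal (L : EuclideanSpace ℝ (Fin m) →L[ℝ] ℝ) :
    1 ≤ ‖tangentNormal L‖ := by
  simpa [tangentNormal] using abs_le_norm_snoc (-(InnerProductSpace.toDual ℝ _).symm L) 1

end EuclideanSpace

open EuclideanSpace

theorem mem_cthickening_hyperplane {E : Type*} [NormedAddCommGroup E] [InnerProductSpace ℝ E]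
    {w : E} (hw : w ≠ 0) (t : ℝ) {q : E} {δ : ℝ} (hq : |⟪q, w⟫ - t| ≤ δ * ‖w‖) :
    q ∈ cthickening δ {y | ⟪y, w⟫ = t} := by
  have hw' : 0 < ‖w‖ := norm_pos_iff.2 hw
  refine mem_cthickening_of_dist_le q (q - ((⟪q, w⟫ - t) / ‖w‖ ^ 2) • w) δ _ ?_ ?_
  · change ⟪_, w⟫ = t
    rw [inner_sub_left, real_inner_smul_left, real_inner_self_eq_norm_sq]
    field_simp
    ring
  · rw [dist_eq_norm, sub_sub_cancel, norm_smul, Real.norm_eq_abs, abs_div, abs_sq, sq,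
      div_mul_eq_mul_div, mul_div_mul_right _ _ hw'.ne']
    exact (div_le_iff₀ hw').2 hq

theorem exists_hyperplane_cthickening_graphOf_subset {S : Set (EuclideanSpace ℝ (Fin m))}
    {f : EuclideanSpace ℝ (Fin m) → ℝ} {A δ R : ℝ} (hf : AffineApproxOn A S f) (hA : 0 ≤ A)
    (hδ : 0 < δ) {y : EuclideanSpace ℝ (Fin (m + 1))} (hy : y ∈ cthickening δ (graphOf S f)) :
    ∃ w ≠ 0, ∃ t : ℝ, closedBall y R ∩ cthickening δ (graphOf S f) ⊆
      cthickening (2 * δ + A * (R + 4 * δ) ^ 2) {p | ⟪p, w⟫ = t} := by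
  have hnear : ∀ p ∈ cthickening δ (graphOf S f), ∃ z ∈ S, dist p (snoc z (f z)) < 2 * δ := by
    intro p hp
    obtain ⟨q, ⟨z, hz, rfl⟩, hpq⟩ := mem_thickening_iff.1
      (cthickening_subset_thickening' (δ₂ := 2 * δ) (by positivity) (by linarith) _ hp)
    exact ⟨z, hz, hpq⟩
  obtain ⟨z₀, hz₀, hyz₀⟩ := hnear y hy
  obtain ⟨L, hL⟩ := hf z₀ hz₀
  have hw1 := one_le_norm_tangentNormal L
  have hw0 : tangentNormal L ≠ 0 := norm_pos_iff.1 (one_pos.trans_le hw1)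
  refine ⟨tangentNormal L, hw0, f z₀ - L z₀, ?_⟩
  rintro p ⟨hpy, hp⟩
  obtain ⟨z, hz, hpz⟩ := hnear p hp
  have hzz₀ : ‖z - z₀‖ ≤ R + 4 * δ := by
    calc ‖z - z₀‖ ≤ dist (snoc z (f z)) (snoc z₀ (f z₀)) := by
          rw [dist_eq_norm, snoc_sub_snoc]; exact norm_le_norm_snoc _ _
      _ ≤ dist (snoc z (f z)) p + dist p y + dist y (snoc z₀ (f z₀)) := dist_triangle4 _ _ _ _
      _ ≤ R + 4 * δ := by rw [dist_comm] at hpz; linarith [mem_closedBall.1 hpy]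
  have hgraph : snoc z (f z) ∈
      cthickening (A * (R + 4 * δ) ^ 2) {p | ⟪p, tangentNormal L⟫ = f z₀ - L z₀} := by
    refine mem_cthickening_hyperplane hw0 _ ?_
    calc |⟪snoc z (f z), tangentNormal L⟫ - (f z₀ - L z₀)| = |f z - f z₀ - L (z - z₀)| := by
          rw [inner_snoc_tangentNormal, map_sub]; ring_nf
      _ ≤ A * ‖z - z₀‖ ^ 2 := hL z hz
      _ ≤ A * (R + 4 * δ) ^ 2 := by gcongr
      _ ≤ A * (R + 4 * δ) ^ 2 * ‖tangentNormal L‖ := le_mul_of_one_le_right (by positivity) hw1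
  exact cthickening_cthickening_subset (by positivity) (by positivity) _
    (mem_cthickening_of_dist_le p _ _ _ hgraph hpz.le)

section Covering

variable {X : Type*} [MetricSpace X] [MeasurableSpace X]

theorem msupp_eq_support (μ : Measure X) : msupp μ = μ.support := by
  ext x
  exact Metric.nhds_basis_ball.mem_measureSupport.symm

variable [SecondCountableTopology X]

theorem measure_compl_msupp (μ : Measure X) : μ (msupp μ)ᶜ = 0 := by
  rw [msupp_eq_support]
  exact Measure.measure_compl_support

theorem measure_le_of_covering [OpensMeasurableSpace X] (μ : Measure X) {A G T : Set X} {r : ℝ}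
    (hr : 0 < r) {c : ℝ≥0∞} (hAG : A ⊆ G)
    (hloc : ∀ b ∈ A ∩ msupp μ, μ (closedBall b (5 * r) ∩ G) ≤ c * μ (closedBall b r))
    (hT : ∀ b ∈ A ∩ msupp μ, closedBall b r ⊆ T) : μ A ≤ c * μ T := by
  obtain ⟨u, huA, hdisj, hcov⟩ := Vitali.exists_disjoint_subfamily_covering_enlargement_closedBall
    (A ∩ msupp μ) id (fun _ => r) r (fun _ _ => le_rfl) 5 (by norm_num)
  have hu : u.Countable := (hdisj.mono fun _ => ball_subset_closedBall).countable_of_isOpen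
    (fun _ _ => isOpen_ball) fun _ _ => nonempty_ball.2 hr
  calc μ A = μ (A ∩ msupp μ) := (measure_inter_conull (measure_compl_msupp μ)).symm
    _ ≤ μ (⋃ b ∈ u, closedBall b (5 * r) ∩ G) := measure_mono fun a ha =>
        let ⟨b, hb, hab⟩ := hcov a ha
        mem_biUnion hb ⟨hab (mem_closedBall_self hr.le), hAG ha.1⟩
    _ ≤ ∑' b : u, μ (closedBall (b : X) (5 * r) ∩ G) := measure_biUnion_le μ hu _
    _ ≤ ∑' b : u, c * μ (closedBall (b : X) r) :=
        ENNReal.tsum_le_tsum fun b => hloc b (huA b.2)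
    _ = c * μ (⋃ b ∈ u, closedBall b r) := by
        rw [ENNReal.tsum_mul_left, measure_biUnion (f := fun b => closedBall b r) hu hdisj
          fun _ _ => measurableSet_closedBall]
    _ ≤ c * μ T := by
        gcongr
        exact iUnion₂_subset fun b hb => hT b (huA hb)

end Covering

section Friendly

variable {μ : Measure (EuclideanSpace ℝ (Fin (m + 1)))} {α Cd CF ρ₀ : ℝ}

theorem Federer.measure_closedBall_five_mul_le (hFed : Federer CF ρ₀ μ) (hCF : 0 ≤ CF)
    {x : EuclideanSpace ℝ (Fin (m + 1))} (hx : x ∈ msupp μ) {ρ : ℝ} (hρ : 0 < ρ)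
    (hρ₀ : 4 * ρ ≤ ρ₀) :
    μ (closedBall x (5 * ρ)) ≤ ENNReal.ofReal (CF ^ 3) * μ (closedBall x ρ) :=
  calc μ (closedBall x (5 * ρ)) ≤ μ (closedBall x (2 * (2 * (2 * ρ)))) :=
        measure_mono (closedBall_subset_closedBall (by linarith))
    _ ≤ ENNReal.ofReal CF * μ (closedBall x (2 * (2 * ρ))) :=
        hFed x hx _ (by positivity) (by linarith)
    _ ≤ ENNReal.ofReal CF * (ENNReal.ofReal CF * μ (closedBall x (2 * ρ))) := by
        gcongr; exact hFed x hx _ (by positivity) (by linarith)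
    _ ≤ ENNReal.ofReal CF * (ENNReal.ofReal CF * (ENNReal.ofReal CF * μ (closedBall x ρ))) := by
        gcongr; exact hFed x hx _ hρ (by linarith)
    _ = ENNReal.ofReal (CF ^ 3) * μ (closedBall x ρ) := by
        rw [ENNReal.ofReal_pow hCF]; ring

/-- The graph neighbourhood lies in the `(2 + 81κ) r²ρ`-neighbourhood of a tangent hyperplane,
to which absolute decay applies. -/
theorem measure_closedBall_inter_cthickening_graphOf_le (hdec : AbsDecaying α Cd ρ₀ μ)
    (hFed : Federer CF ρ₀ μ) (hCd : 0 ≤ Cd) (hCF : 0 ≤ CF) {S : Set (EuclideanSpace ℝ (Fin m))}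
    {f : EuclideanSpace ℝ (Fin m) → ℝ} {κ ρ r : ℝ} (hf : AffineApproxOn (κ / ρ) S f)
    (hκ : 0 ≤ κ) (hρ : 0 < ρ) (hρ₀ : 5 * ρ ≤ ρ₀) (hr : 0 < r) (hr1 : r ≤ 1)
    {b : EuclideanSpace ℝ (Fin (m + 1))} (hb : b ∈ msupp μ)
    (hbΓ : b ∈ cthickening (r ^ 2 * ρ) (graphOf S f)) :
    μ (closedBall b (5 * (r * ρ)) ∩ cthickening (r ^ 2 * ρ) (graphOf S f)) ≤
      ENNReal.ofReal (Cd * ((2 + 81 * κ) / 5 * r) ^ α * CF ^ 3) * μ (closedBall b (r * ρ)) := by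
  obtain ⟨w, hw, t, hsub⟩ := exists_hyperplane_cthickening_graphOf_subset (R := 5 * (r * ρ)) hf
    (by positivity) (by positivity) hbΓ
  have hwidth : 2 * (r ^ 2 * ρ) + κ / ρ * (5 * (r * ρ) + 4 * (r ^ 2 * ρ)) ^ 2 ≤
      (2 + 81 * κ) / 5 * r * (5 * (r * ρ)) := by
    have h81 : (5 + 4 * r) ^ 2 ≤ 81 := by nlinarith
    have : κ / ρ * (5 * (r * ρ) + 4 * (r ^ 2 * ρ)) ^ 2 = κ * r ^ 2 * ρ * (5 + 4 * r) ^ 2 := by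
      field_simp
    rw [this]
    nlinarith [mul_le_mul_of_nonneg_left h81 (by positivity : 0 ≤ κ * r ^ 2 * ρ)]
  have hrρ : r * ρ ≤ ρ := mul_le_of_le_one_left hρ.le hr1
  calc _ ≤ μ (closedBall b (5 * (r * ρ)) ∩
          cthickening ((2 + 81 * κ) / 5 * r * (5 * (r * ρ))) {p | ⟪p, w⟫ = t}) :=
        measure_mono (subset_inter inter_subset_left (hsub.trans (cthickening_mono hwidth _)))
    _ ≤ ENNReal.ofReal (Cd * ((2 + 81 * κ) / 5 * r) ^ α) * μ (closedBall b (5 * (r * ρ))) :=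
        hdec b hb _ (by positivity) (by linarith) w t hw _ (by positivity)
    _ ≤ ENNReal.ofReal (Cd * ((2 + 81 * κ) / 5 * r) ^ α) *
          (ENNReal.ofReal (CF ^ 3) * μ (closedBall b (r * ρ))) := by
        gcongr; exact hFed.measure_closedBall_five_mul_le hCF hb (by positivity) (by linarith)
    _ = _ := by rw [← mul_assoc, ← ENNReal.ofReal_mul (by positivity)]

end Friendly

theorem mul_rpow_mul_rpow_le {c r s α β : ℝ} (hc : 0 ≤ c) (hr : 0 < r) (hs : 0 ≤ s)
    (hsr : s ≤ 2 * r) (hβ : 0 ≤ β) (hβα : β ≤ α) :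
    (c * r) ^ α * s ^ β ≤ (2 * c) ^ α * (r ^ 2) ^ ((α + β) / 2) := by
  have hsβ : s ^ β ≤ 2 ^ α * r ^ β :=
    calc s ^ β ≤ (2 * r) ^ β := Real.rpow_le_rpow hs hsr hβ
      _ = 2 ^ β * r ^ β := Real.mul_rpow zero_le_two hr.le
      _ ≤ 2 ^ α * r ^ β := by gcongr; norm_num
  have hr2 : (r ^ 2) ^ ((α + β) / 2) = r ^ α * r ^ β := by
    rw [← Real.rpow_natCast, ← Real.rpow_mul hr.le, ← Real.rpow_add hr]
    norm_num
    ring_nf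
  rw [Real.mul_rpow hc hr.le, Real.mul_rpow zero_le_two hc, hr2]
  calc c ^ α * r ^ α * s ^ β ≤ c ^ α * r ^ α * (2 ^ α * r ^ β) := by gcongr
    _ = 2 ^ α * c ^ α * (r ^ α * r ^ β) := by ring

section Induction

variable {μ : Measure (EuclideanSpace ℝ (Fin (m + 1)))} {α Cd CF ρ₀ : ℝ}

variable (μ) in
def GraphDecayBound (ρ₁ κ β C : ℝ) : Prop :=
  ∀ (S : Set (EuclideanSpace ℝ (Fin m))) (f : EuclideanSpace ℝ (Fin m) → ℝ)
    (x : EuclideanSpace ℝ (Fin (m + 1))) (ρ ε : ℝ),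
    AffineApproxOn (κ / ρ) S f → x ∈ msupp μ → 0 < ρ → ρ ≤ ρ₁ → 0 < ε →
      μ (closedBall x (5 * ρ) ∩ cthickening (ε * ρ) (graphOf S f)) ≤
        ENNReal.ofReal (C * ε ^ β) * μ (closedBall x ρ)

theorem Federer.measure_closedBall_five_mul_inter_le (hFed : Federer CF ρ₀ μ) (hCF : 0 ≤ CF)
    {x : EuclideanSpace ℝ (Fin (m + 1))} (hx : x ∈ msupp μ) {ρ : ℝ} (hρ : 0 < ρ)
    (hρ₀ : 4 * ρ ≤ ρ₀) (s : Set (EuclideanSpace ℝ (Fin (m + 1)))) {c : ℝ} (hc : CF ^ 3 ≤ c) :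
    μ (closedBall x (5 * ρ) ∩ s) ≤ ENNReal.ofReal c * μ (closedBall x ρ) :=
  calc μ (closedBall x (5 * ρ) ∩ s) ≤ μ (closedBall x (5 * ρ)) := measure_mono inter_subset_left
    _ ≤ ENNReal.ofReal (CF ^ 3) * μ (closedBall x ρ) :=
        hFed.measure_closedBall_five_mul_le hCF hx hρ hρ₀
    _ ≤ ENNReal.ofReal c * μ (closedBall x ρ) := by gcongr

theorem Federer.graphDecayBound_zero (hFed : Federer CF ρ₀ μ) (hCF : 0 ≤ CF) (κ : ℝ) :
    GraphDecayBound μ (ρ₀ / 4) κ 0 (CF ^ 3) :=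
  fun _ _ _ _ _ _ hx hρ hρ₁ _ => hFed.measure_closedBall_five_mul_inter_le hCF hx hρ
    (by linarith) _ (by rw [Real.rpow_zero, mul_one])

/-- Cover by balls of radius `√ε ρ`. Their union stays in the ball of radius
`6ρ = 5 · (6ρ / 5)`, where the bound for `β` applies with `κ` rescaled to `6κ / 5`. -/
theorem GraphDecayBound.step (hdec : AbsDecaying α Cd ρ₀ μ) (hFed : Federer CF ρ₀ μ)
    (hCd : 0 ≤ Cd) (hCF : 0 ≤ CF) {ρ₁ κ β C : ℝ} (hρ₁ : 4 * ρ₁ ≤ ρ₀) (hκ : 0 ≤ κ) (hβ : 0 ≤ β)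
    (hβα : β ≤ α) (hC : 0 ≤ C) (h : GraphDecayBound μ ρ₁ (6 / 5 * κ) β C) :
    GraphDecayBound μ (ρ₁ / 2) κ ((α + β) / 2)
      (CF ^ 3 + Cd * CF ^ 4 * C * (2 * ((2 + 81 * κ) / 5)) ^ α) := by
  intro S f x ρ ε hf hx hρ hρ₁' hε
  rcases lt_or_ge 1 ε with hε1 | hε1
  · refine hFed.measure_closedBall_five_mul_inter_le hCF hx hρ (by linarith) _ ?_
    exact (le_add_of_nonneg_right (by positivity)).trans
      (le_mul_of_one_le_right (by positivity) (Real.one_le_rpow hε1.le (by linarith)))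
  obtain ⟨r, hr, hr1, rfl⟩ : ∃ r, 0 < r ∧ r ≤ 1 ∧ r ^ 2 = ε :=
    ⟨√ε, Real.sqrt_pos.2 hε, Real.sqrt_le_one.2 hε1, Real.sq_sqrt hε.le⟩
  set Γ := graphOf S f
  set c := (2 + 81 * κ) / 5
  set ρ₂ := 6 / 5 * ρ with hρ₂
  set ε₂ := 5 / 6 * (r + r ^ 2) with hε₂
  have hcov : μ (closedBall x (5 * ρ) ∩ cthickening (r ^ 2 * ρ) Γ) ≤
      ENNReal.ofReal (Cd * (c * r) ^ α * CF ^ 3) *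
        μ (closedBall x (5 * ρ₂) ∩ cthickening (ε₂ * ρ₂) Γ) := by
    refine measure_le_of_covering μ (by positivity) inter_subset_right
      (fun b hb => measure_closedBall_inter_cthickening_graphOf_le hdec hFed hCd hCF hf hκ hρ
        (by linarith) hr hr1 hb.2 hb.1.2) fun b hb => subset_inter ?_ ?_
    · exact closedBall_subset_closedBall' (by nlinarith [mem_closedBall.1 hb.1.1])
    · exact (closedBall_subset_cthickening hb.1.2 _).trans
        ((cthickening_cthickening_subset (by positivity) (by positivity) _).trans
          (cthickening_mono (by rw [hε₂, hρ₂]; ring_nf; rfl) _))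
  have hIH := h S f x ρ₂ ε₂ (hf.mono (mul_div_mul_left κ ρ (by norm_num)).ge) hx
    (by positivity) (by linarith) (by positivity)
  have hxρ₂ : μ (closedBall x ρ₂) ≤ ENNReal.ofReal CF * μ (closedBall x ρ) :=
    (measure_mono (closedBall_subset_closedBall (by linarith : ρ₂ ≤ 2 * ρ))).trans
      (hFed x hx ρ hρ (by linarith))
  have hreal : Cd * (c * r) ^ α * CF ^ 3 * (C * ε₂ ^ β) * CF ≤
      (CF ^ 3 + Cd * CF ^ 4 * C * (2 * c) ^ α) * (r ^ 2) ^ ((α + β) / 2) :=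
    calc _ = Cd * CF ^ 4 * C * ((c * r) ^ α * ε₂ ^ β) := by ring
      _ ≤ Cd * CF ^ 4 * C * ((2 * c) ^ α * (r ^ 2) ^ ((α + β) / 2)) := by
        gcongr Cd * CF ^ 4 * C * ?_
        exact mul_rpow_mul_rpow_le (by positivity) hr (by positivity) (by nlinarith) hβ hβα
      _ ≤ _ := by rw [← mul_assoc]; gcongr; exact le_add_of_nonneg_left (by positivity)
  calc _ ≤ ENNReal.ofReal (Cd * (c * r) ^ α * CF ^ 3) *
        (ENNReal.ofReal (C * ε₂ ^ β) * (ENNReal.ofReal CF * μ (closedBall x ρ))) :=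
        hcov.trans (by gcongr; exact hIH.trans (by gcongr))
    _ = ENNReal.ofReal (Cd * (c * r) ^ α * CF ^ 3 * (C * ε₂ ^ β) * CF) * μ (closedBall x ρ) := by
        rw [← mul_assoc, ← mul_assoc, ← ENNReal.ofReal_mul (by positivity),
          ← ENNReal.ofReal_mul (by positivity)]
    _ ≤ _ := by gcongr

theorem exists_graphDecayBound (hdec : AbsDecaying α Cd ρ₀ μ) (hFed : Federer CF ρ₀ μ)
    (hCd : 0 ≤ Cd) (hCF : 0 ≤ CF) (hρ₀ : 0 ≤ ρ₀) (hα : 0 ≤ α) (n : ℕ) :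
    ∀ κ, 0 ≤ κ → ∃ C, 0 ≤ C ∧ GraphDecayBound μ (ρ₀ / 4 / 2 ^ n) κ (α * (1 - (1 / 2) ^ n)) C := by
  induction n with
  | zero => exact fun κ _ => ⟨CF ^ 3, by positivity, by simpa using hFed.graphDecayBound_zero hCF κ⟩
  | succ n ih =>
    intro κ hκ
    obtain ⟨C, hC, h⟩ := ih (6 / 5 * κ) (by positivity)
    have hn : (1 / 2 : ℝ) ^ n ≤ 1 := pow_le_one₀ (by norm_num) (by norm_num)
    have hstep := h.step hdec hFed hCd hCF (by
        rw [show 4 * (ρ₀ / 4 / 2 ^ n) = ρ₀ / 2 ^ n by ring]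
        exact div_le_self hρ₀ (one_le_pow₀ one_le_two)) hκ
      (mul_nonneg hα (by linarith)) (mul_le_of_le_one_right hα (sub_le_self _ (by positivity))) hC
    rw [show ρ₀ / 4 / 2 ^ n / 2 = ρ₀ / 4 / 2 ^ (n + 1) by rw [pow_succ, div_div],
      show (α + α * (1 - (1 / 2) ^ n)) / 2 = α * (1 - (1 / 2) ^ (n + 1)) by ring] at hstep
    exact ⟨_, by positivity, hstep⟩

theorem GraphDecayBound.measure_closedBall_inter_le (hFed : Federer CF ρ₀ μ) {L κ β C : ℝ}
    (hL : 1 ≤ L) (hκ : 0 ≤ κ) (h : GraphDecayBound μ (ρ₀ / L) κ β C)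
    {S : Set (EuclideanSpace ℝ (Fin m))} {f : EuclideanSpace ℝ (Fin m) → ℝ}
    {x : EuclideanSpace ℝ (Fin (m + 1))} {ρ ε : ℝ} (hf : AffineApproxOn (κ / ρ) S f)
    (hx : x ∈ msupp μ) (hρ : 0 < ρ) (hρρ₀ : ρ ≤ ρ₀) (hε : 0 < ε) :
    μ (closedBall x ρ ∩ cthickening (ε * ρ) (graphOf S f)) ≤
      ENNReal.ofReal (C * (L * ε) ^ β) * (ENNReal.ofReal CF * μ (closedBall x ρ)) := by
  have hL0 : 0 < L := one_pos.trans_le hL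
  have hρL : ρ / L ≤ ρ := div_le_self hρ.le hL
  refine (measure_le_of_covering μ (r := ρ / L) (T := closedBall x (2 * ρ)) (by positivity)
    inter_subset_right (fun b hb => ?_) fun b hb => ?_).trans (by gcongr; exact hFed x hx ρ hρ hρρ₀)
  · have := h S f b (ρ / L) (L * ε) (hf.mono (div_le_div_of_nonneg_left hκ (by positivity) hρL))
      hb.2 (by positivity) (div_le_div_of_nonneg_right hρρ₀ hL0.le) (by positivity)
    rwa [show L * ε * (ρ / L) = ε * ρ by field_simp] at this
  · exact closedBall_subset_closedBall' (by linarith [mem_closedBall.1 hb.1.1])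

theorem GraphDecayBound.measure_closedBall_inter_le_rpow (hFed : Federer CF ρ₀ μ) (hCF : 0 ≤ CF)
    {L κ β' C : ℝ} (hL : 1 ≤ L) (hκ : 0 ≤ κ) (hC : 0 ≤ C) (h : GraphDecayBound μ (ρ₀ / L) κ β' C)
    {β : ℝ} (hβ : 0 ≤ β) (hββ' : β ≤ β') {S : Set (EuclideanSpace ℝ (Fin m))}
    {f : EuclideanSpace ℝ (Fin m) → ℝ} {x : EuclideanSpace ℝ (Fin (m + 1))} {ρ ε : ℝ}
    (hf : AffineApproxOn (κ / ρ) S f) (hx : x ∈ msupp μ) (hρ : 0 < ρ) (hρρ₀ : ρ ≤ ρ₀)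
    (hε : 0 < ε) :
    μ (closedBall x ρ ∩ cthickening (ε * ρ) (graphOf S f)) ≤
      ENNReal.ofReal ((1 + C * L ^ β' * CF) * ε ^ β) * μ (closedBall x ρ) := by
  rcases lt_or_ge 1 ε with hε1 | hε1
  · exact (measure_mono inter_subset_left).trans (le_mul_of_one_le_left' (ENNReal.one_le_ofReal.2
      (one_le_mul_of_one_le_of_one_le (le_add_of_nonneg_right (by positivity))
        (Real.one_le_rpow hε1.le hβ))))
  have hreal : C * (L * ε) ^ β' * CF ≤ (1 + C * L ^ β' * CF) * ε ^ β :=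
    calc C * (L * ε) ^ β' * CF = C * L ^ β' * CF * ε ^ β' := by
          rw [Real.mul_rpow (by positivity) hε.le]; ring
      _ ≤ C * L ^ β' * CF * ε ^ β := by
          gcongr C * L ^ β' * CF * ?_; exact Real.rpow_le_rpow_of_exponent_ge hε hε1 hββ'
      _ ≤ (1 + C * L ^ β' * CF) * ε ^ β := by gcongr; linarith
  calc _ ≤ ENNReal.ofReal (C * (L * ε) ^ β') * (ENNReal.ofReal CF * μ (closedBall x ρ)) :=
        h.measure_closedBall_inter_le hFed hL hκ hf hx hρ hρρ₀ hε
    _ = ENNReal.ofReal (C * (L * ε) ^ β' * CF) * μ (closedBall x ρ) := by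
        rw [← mul_assoc, ← ENNReal.ofReal_mul (by positivity)]
    _ ≤ _ := by gcongr

end Induction

theorem graph_neighborhood_power_decay_general (α β K₁ K₂ : ℝ) (hα : 0 < α) (hβ : β < α)
    (hβ0 : 0 < β) (hK₁ : 0 < K₁) (hK₂ : 0 < K₂)
    (μ : Measure (EuclideanSpace ℝ (Fin (m + 1))))
    (Cd CF ρ₀ : ℝ) (hCd : 0 < Cd) (hCF : 0 < CF) (hρ₀ : 0 < ρ₀)
    (hdec : AbsDecaying α Cd ρ₀ μ) (hFed : Federer CF ρ₀ μ) :
    ∃ C > (0 : ℝ), ∀ (S : Set (EuclideanSpace ℝ (Fin m)))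
      (f : EuclideanSpace ℝ (Fin m) → ℝ)
      (f' : EuclideanSpace ℝ (Fin m) → (EuclideanSpace ℝ (Fin m) →L[ℝ] ℝ))
      (f'' : EuclideanSpace ℝ (Fin m) →
        (EuclideanSpace ℝ (Fin m) →L[ℝ] EuclideanSpace ℝ (Fin m) →L[ℝ] ℝ))
      (x : EuclideanSpace ℝ (Fin (m + 1))) (ρ ε : ℝ),
      IsQuasiconvex K₁ S →
      (∀ z ∈ S, HasFDerivWithinAt f (f' z) S z) →
      (∀ z ∈ S, HasFDerivWithinAt f' (f'' z) S z) →
      (∀ z ∈ S, ‖f'' z‖ ≤ K₂ / ρ) →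
      x ∈ msupp μ → 0 < ρ → ρ ≤ ρ₀ → 0 < ε →
      μ (closedBall x ρ ∩ cthickening (ε * ρ) (graphOf S f)) ≤
        ENNReal.ofReal (C * ε ^ β) * μ (closedBall x ρ) := by
  obtain ⟨n, hn⟩ := exists_pow_lt_of_lt_one (div_pos (sub_pos.2 hβ) hα) one_half_lt_one
  rw [lt_div_iff₀ hα] at hn
  obtain ⟨C, hC, hdecay⟩ := exists_graphDecayBound hdec hFed hCd.le hCF.le hρ₀.le hα.le n
    (K₂ * K₁ ^ 2) (by positivity)
  rw [div_div] at hdecay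
  have hL : (1 : ℝ) ≤ 4 * 2 ^ n := by linarith [one_le_pow₀ (M₀ := ℝ) (n := n) one_le_two]
  refine ⟨1 + C * (4 * 2 ^ n) ^ (α * (1 - (1 / 2) ^ n)) * CF, by positivity,
    fun S f f' f'' x ρ ε hS hf hf' hf'' hx hρ hρρ₀ hε => ?_⟩
  exact hdecay.measure_closedBall_inter_le_rpow hFed hCF.le hL (by positivity) hC hβ0.le
    (by linarith) ((hS.affineApproxOn hK₁.le hf hf' hf'').mono (by rw [div_mul_eq_mul_div])) hx
    hρ hρρ₀ hε

/-- Power decay for neighborhoods of graphs: if `μ` is absolutely `α`-friendly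
(absolutely `α`-decaying and Federer) and compactly supported, `S` is
`K₁`-quasiconvex, `‖f''‖_S ≤ K₂/ρ`, and `β < α`, then for every ball `B = B(x,ρ)`
centered on the support and every `ε > 0`,
`μ(B ∩ Γ^{(ερ)}) ≤ C ε^β μ(B)` with `C = C(K₁,K₂,μ,β)`. -/
theorem graph_neighborhood_power_decay (α β K₁ K₂ : ℝ) (hα : 0 < α) (hβ : β < α)
    (hβ0 : 0 < β) (hK₁ : 0 < K₁) (hK₂ : 0 < K₂)
    (μ : Measure (EuclideanSpace ℝ (Fin (m + 1))))
    (Cd CF ρ₀ : ℝ) (hCd : 0 < Cd) (hCF : 0 < CF) (hρ₀ : 0 < ρ₀)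
    (hdec : AbsDecaying α Cd ρ₀ μ) (hFed : Federer CF ρ₀ μ)
    (hcpt : IsCompact (msupp μ)) :
    ∃ C > (0 : ℝ), ∀ (S : Set (EuclideanSpace ℝ (Fin m)))
      (f : EuclideanSpace ℝ (Fin m) → ℝ)
      (f' : EuclideanSpace ℝ (Fin m) → (EuclideanSpace ℝ (Fin m) →L[ℝ] ℝ))
      (f'' : EuclideanSpace ℝ (Fin m) →
        (EuclideanSpace ℝ (Fin m) →L[ℝ] EuclideanSpace ℝ (Fin m) →L[ℝ] ℝ))
      (x : EuclideanSpace ℝ (Fin (m + 1))) (ρ ε : ℝ),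
      IsQuasiconvex K₁ S →
      (∀ z ∈ S, HasFDerivWithinAt f (f' z) S z) →
      (∀ z ∈ S, HasFDerivWithinAt f' (f'' z) S z) →
      (∀ z ∈ S, ‖f'' z‖ ≤ K₂ / ρ) →
      x ∈ msupp μ → 0 < ρ → ρ ≤ ρ₀ → 0 < ε →
      μ (closedBall x ρ ∩ cthickening (ε * ρ) (graphOf S f)) ≤
        ENNReal.ofReal (C * ε ^ β) * μ (closedBall x ρ) :=
  graph_neighborhood_power_decay_general α β K₁ K₂ hα hβ hβ0 hK₁ hK₂ μ Cd CF ρ₀ hCd hCF hρ₀ hdec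
    hFed
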